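/- arXiv:1703.08261 — 3 statements merged into one kernel-verified Lean document; each statement's English description precedes it below -/
import Mathlib

section
/- If s1, s2, s3, s4 are short edges of K6 such that s1 crosses s2, s2 crosses s3, s3 crosses s4, s1 ≠ s3, and s2 ≠ s4, then s1 and s4 cross the same long edge. (Hence a subsequence long–short–short–short–short–long cannot appear in a chain of consecutively crossing edges.) -/
/-!
Write `⟨i⟩` for the short edge `{i, i + 2}`. Two short edges `⟨i⟩` and `⟨j⟩` cross exactly when
`j = i ± 1`, so the crossing graph of the six short edges is a hexagon. A walk of three steps in a
hexagon that never turns back ends at the antipode: `s₁ = ⟨i⟩` and `s₄ = ⟨i + 3⟩`. These two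
antipodal short edges both cross the long edge `{i + 1, i + 4}`.
-/

/-- The cyclic length of the chord joining vertices `a` and `b` of `K₆`,
whose vertices are labeled by `ZMod 6` in cyclic order around a circle. -/
def cycLen (a b : ZMod 6) : ℕ := min (b - a).val (a - b).val

/-- An interior edge of `K₆`: a 2-element set of vertices at cyclic distance at least 2. -/
def InteriorEdge (e : Finset (ZMod 6)) : Prop :=
  e.card = 2 ∧ ∀ a ∈ e, ∀ b ∈ e, a ≠ b → 2 ≤ cycLen a b

/-- A short edge of `K₆`: a 2-element set of vertices at cyclic distance exactly 2. -/
def ShortEdge (e : Finset (ZMod 6)) : Prop :=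
  e.card = 2 ∧ ∀ a ∈ e, ∀ b ∈ e, a ≠ b → cycLen a b = 2

/-- A long edge of `K₆`: a 2-element set of vertices at cyclic distance exactly 3. -/
def LongEdge (e : Finset (ZMod 6)) : Prop :=
  e.card = 2 ∧ ∀ a ∈ e, ∀ b ∈ e, a ≠ b → cycLen a b = 3

/-- `x` lies in the open cyclic arc from `a` to `b` (in the cyclic order of labels). -/
def InArc (a b x : ZMod 6) : Prop := 0 < (x - a).val ∧ (x - a).val < (b - a).val

/-- Two chords `{a,b}` and `{c,d}` cross iff their endpoint sets are disjoint and
exactly one of `c`, `d` lies in the open cyclic arc from `a` to `b`. -/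
def Crosses (e f : Finset (ZMod 6)) : Prop :=
  Disjoint e f ∧ ∃ a b c d : ZMod 6, a ≠ b ∧ c ≠ d ∧ e = {a, b} ∧ f = {c, d} ∧
    Xor' (InArc a b c) (InArc a b d)

theorem eq_add_three_nsmul_or_eq_sub_three_nsmul {G : Type*} [AddCommGroup G] {g i j k l : G}
    (hij : j = i + g ∨ j = i - g) (hjk : k = j + g ∨ k = j - g) (hkl : l = k + g ∨ l = k - g)
    (hik : i ≠ k) (hjl : j ≠ l) : l = i + 3 • g ∨ l = i - 3 • g := by
  rcases hij with rfl | rfl <;> rcases hjk with rfl | rfl <;> rcases hkl with rfl | rfl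
  all_goals grind

theorem not_inArc_iff {a b x : ZMod 6} (hab : a ≠ b) (hxa : x ≠ a) (hxb : x ≠ b) :
    ¬InArc a b x ↔ InArc b a x := by
  revert a b x
  unfold InArc
  decide

/-- `Crosses` does not depend on how the chords are written as pairs: swapping the ends of the
first chord replaces its arc by the complementary one. -/
theorem crosses_pair_iff {a b c d : ZMod 6} (hab : a ≠ b) (hcd : c ≠ d) :
    Crosses {a, b} {c, d} ↔
      Disjoint ({a, b} : Finset (ZMod 6)) {c, d} ∧ Xor (InArc a b c) (InArc a b d) := by
  refine ⟨fun ⟨hdisj, a', b', c', d', _, _, he, hf, hx⟩ => ⟨hdisj, ?_⟩,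
    fun ⟨hdisj, hx⟩ => ⟨hdisj, a, b, c, d, hab, hcd, rfl, rfl, hx⟩⟩
  have hc : c ∉ ({a, b} : Finset (ZMod 6)) := Finset.disjoint_right.mp hdisj (by simp)
  have hd : d ∉ ({a, b} : Finset (ZMod 6)) := Finset.disjoint_right.mp hdisj (by simp)
  simp only [Finset.mem_insert, Finset.mem_singleton, not_or] at hc hd
  rw [← Finset.coe_inj, Finset.coe_pair, Finset.coe_pair, Set.pair_eq_pair_iff] at he hf
  replace hx : Xor _ _ := hx
  rcases he with ⟨rfl, rfl⟩ | ⟨rfl, rfl⟩ <;> rcases hf with ⟨rfl, rfl⟩ | ⟨rfl, rfl⟩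
  · exact hx
  · rwa [xor_comm] at hx
  · rwa [← not_inArc_iff hab hc.1 hc.2, ← not_inArc_iff hab hd.1 hd.2, xor_not_not]
      at hx
  · rwa [← not_inArc_iff hab hc.1 hc.2, ← not_inArc_iff hab hd.1 hd.2, xor_not_not,
      xor_comm] at hx

theorem ShortEdge.exists_eq_pair {e : Finset (ZMod 6)} (he : ShortEdge e) :
    ∃ i, e = {i, i + 2} := by
  obtain ⟨a, b, hab, rfl⟩ := Finset.card_eq_two.mp he.1
  have hlen : cycLen a b = 2 := he.2 a (by simp) b (by simp) hab
  have hpair : ∀ a b : ZMod 6, cycLen a b = 2 → b = a + 2 ∨ a = b + 2 := by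
    unfold cycLen
    decide
  rcases hpair a b hlen with rfl | rfl
  · exact ⟨a, rfl⟩
  · exact ⟨b, Finset.pair_comm _ _⟩

theorem eq_add_one_or_eq_sub_one_of_crosses {i j : ZMod 6} (h : Crosses {i, i + 2} {j, j + 2}) :
    j = i + 1 ∨ j = i - 1 := by
  have hne : ∀ i : ZMod 6, i ≠ i + 2 := by decide
  rw [crosses_pair_iff (hne i) (hne j)] at h
  revert i j
  unfold InArc
  decide

theorem longEdge_pair (i : ZMod 6) : LongEdge {i + 1, i + 4} := by
  revert i
  unfold LongEdge cycLen
  decide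

theorem crosses_longEdge_pair (i : ZMod 6) :
    Crosses {i, i + 2} {i + 1, i + 4} ∧ Crosses {i + 3, i + 3 + 2} {i + 1, i + 4} := by
  have hne : ∀ i : ZMod 6, i ≠ i + 2 ∧ i + 3 ≠ i + 3 + 2 ∧ i + 1 ≠ i + 4 := by decide
  obtain ⟨h1, h2, h3⟩ := hne i
  rw [crosses_pair_iff h1 h3, crosses_pair_iff h2 h3]
  revert i
  unfold InArc
  decide

/-- If `s₁ s₂ s₃ s₄` are short edges of `K₆` with `s₁` crossing `s₂`, `s₂` crossing `s₃`,
`s₃` crossing `s₄`, `s₁ ≠ s₃` and `s₂ ≠ s₄`, then `s₁` and `s₄` cross the same long edge. -/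
theorem stmt_7 (s1 s2 s3 s4 : Finset (ZMod 6))
    (h1 : ShortEdge s1) (h2 : ShortEdge s2) (h3 : ShortEdge s3) (h4 : ShortEdge s4)
    (h12 : Crosses s1 s2) (h23 : Crosses s2 s3) (h34 : Crosses s3 s4)
    (h13 : s1 ≠ s3) (h24 : s2 ≠ s4) :
    ∃ L : Finset (ZMod 6), LongEdge L ∧ Crosses s1 L ∧ Crosses s4 L := by
  obtain ⟨i, rfl⟩ := h1.exists_eq_pair
  obtain ⟨j, rfl⟩ := h2.exists_eq_pair
  obtain ⟨k, rfl⟩ := h3.exists_eq_pair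
  obtain ⟨l, rfl⟩ := h4.exists_eq_pair
  have hik : i ≠ k := by rintro rfl; exact h13 rfl
  have hjl : j ≠ l := by rintro rfl; exact h24 rfl
  have hl : l = i + 3 := by
    have h := eq_add_three_nsmul_or_eq_sub_three_nsmul (eq_add_one_or_eq_sub_one_of_crosses h12)
      (eq_add_one_or_eq_sub_one_of_crosses h23) (eq_add_one_or_eq_sub_one_of_crosses h34) hik hjl
    have hantipode : i - 3 = i + 3 := by rw [sub_eq_add_neg]; rfl
    simpa only [nsmul_one, Nat.cast_ofNat, hantipode, or_self] using h
  subst hl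
  exact ⟨_, longEdge_pair i, crosses_longEdge_pair i⟩
end

section
/- The nine interior edges of K6 can be partitioned into three classes of pairwise noncrossing edges, and every partition of the interior edges of K6 into classes of pairwise noncrossing edges has at least three classes. -/
/-- A partition of the interior edges of `K₆` into (nonempty, pairwise disjoint) classes
of pairwise noncrossing edges. -/
def IsSheetPartition (P : Finset (Finset (Finset (ZMod 6)))) : Prop :=
  (∀ C ∈ P, C.Nonempty) ∧
  (∀ C ∈ P, ∀ D ∈ P, C ≠ D → Disjoint C D) ∧
  (∀ e : Finset (ZMod 6), InteriorEdge e ↔ ∃ C ∈ P, e ∈ C) ∧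
  (∀ C ∈ P, ∀ e ∈ C, ∀ f ∈ C, e ≠ f → ¬ Crosses e f)


/-!
Each of the three zigzag paths `k+2 – k – k+3 – k+5` (for `k = 0, 1, 2`) is noncrossing, and
together they use every interior edge exactly once. Conversely, the three long edges cross
pairwise, so they must lie in three different classes of any noncrossing partition.
-/

instance : DecidablePred InteriorEdge := fun _ => by unfold InteriorEdge; infer_instance

instance (a b x : ZMod 6) : Decidable (InArc a b x) := by unfold InArc; infer_instance

instance (e f : Finset (ZMod 6)) : Decidable (Crosses e f) := by
  unfold Crosses Xor'; infer_instance

def zigzag (k : ZMod 6) : Finset (Finset (ZMod 6)) := {{k, k + 2}, {k, k + 3}, {k + 3, k + 5}}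

theorem zigzag_nonempty : ∀ k : ZMod 6, (zigzag k).Nonempty := by
  decide

set_option maxRecDepth 4000 in
theorem zigzag_noncrossing :
    ∀ k : ZMod 6, ∀ e ∈ zigzag k, ∀ f ∈ zigzag k, e ≠ f → ¬ Crosses e f := by
  decide

theorem pairwise_disjoint_zigzag :
    ∀ k ∈ ({0, 1, 2} : Finset (ZMod 6)), ∀ l ∈ ({0, 1, 2} : Finset (ZMod 6)), k ≠ l →
      Disjoint (zigzag k) (zigzag l) := by
  decide

theorem interiorEdge_iff_mem_zigzag :
    ∀ e : Finset (ZMod 6), InteriorEdge e ↔ ∃ k ∈ ({0, 1, 2} : Finset (ZMod 6)), e ∈ zigzag k := by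
  decide

def zigzagPartition : Finset (Finset (Finset (ZMod 6))) := ({0, 1, 2} : Finset (ZMod 6)).image zigzag

theorem isSheetPartition_zigzagPartition : IsSheetPartition zigzagPartition := by
  simp only [IsSheetPartition, zigzagPartition, Finset.forall_mem_image, Finset.exists_mem_image]
  refine ⟨fun k _ => zigzag_nonempty k, fun k hk l hl hkl => ?_, interiorEdge_iff_mem_zigzag,
    fun k _ => zigzag_noncrossing k⟩
  exact pairwise_disjoint_zigzag k hk l hl (mt (congrArg zigzag) hkl)

theorem card_zigzagPartition : zigzagPartition.card = 3 := by
  rw [zigzagPartition, Finset.card_image_of_injOn]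
  · rfl
  · intro k hk l hl hkl
    by_contra hne
    have hdisj := pairwise_disjoint_zigzag k hk l hl hne
    rw [← hkl, Finset.disjoint_self_iff_empty] at hdisj
    exact (zigzag_nonempty k).ne_empty hdisj

def longEdges : Finset (Finset (ZMod 6)) := {{0, 3}, {1, 4}, {2, 5}}

theorem interiorEdge_of_mem_longEdges : ∀ e ∈ longEdges, InteriorEdge e := by
  decide

theorem longEdges_pairwise_crosses : (longEdges : Set (Finset (ZMod 6))).Pairwise Crosses := by
  simp only [Set.Pairwise, Finset.mem_coe]
  decide

theorem card_le_card_of_pairwise_crosses {P : Finset (Finset (Finset (ZMod 6)))}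
    (hP : IsSheetPartition P) {S : Finset (Finset (ZMod 6))} (hS : ∀ e ∈ S, InteriorEdge e)
    (hcross : (S : Set (Finset (ZMod 6))).Pairwise Crosses) : S.card ≤ P.card := by
  obtain ⟨-, -, hcover, hnoncross⟩ := hP
  refine Finset.card_le_card_of_forall_subsingleton (· ∈ ·) (fun e he => ?_) ?_
  · exact (hcover e).1 (hS e he)
  · rintro C hC e ⟨he, heC⟩ f ⟨hf, hfC⟩
    by_contra hef
    exact hnoncross C hC e heC f hfC hef (hcross he hf hef)

/-- The nine interior edges of `K₆` can be partitioned into three classes of pairwise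
noncrossing edges, and every such partition into classes of pairwise noncrossing edges
has at least three classes. -/
theorem stmt_8 :
    (∃ P : Finset (Finset (Finset (ZMod 6))), IsSheetPartition P ∧ P.card = 3) ∧
    (∀ P : Finset (Finset (Finset (ZMod 6))), IsSheetPartition P → 3 ≤ P.card) :=
  ⟨⟨zigzagPartition, isSheetPartition_zigzagPartition, card_zigzagPartition⟩,
    fun _ hP => card_le_card_of_pairwise_crosses hP interiorEdge_of_mem_longEdges
      longEdges_pairwise_crosses⟩
end

section
/- In every partition of the nine interior edges of K6 into exactly three classes of pairwise noncrossing edges, each class consists of exactly one long edge and two short edges. -/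
/-!
A family of pairwise noncrossing diagonals of a hexagon has at most three members (a
triangulation of an `n`-gon has `n - 3` diagonals), and any two of the three long diagonals
cross. Nine interior edges in three classes of at most three therefore give exactly three
edges per class; three long edges in three classes of at most one long edge give exactly one
long edge per class; the remaining two edges of each class are short.
-/

theorem Finset.eq_of_forall_le_of_sum_eq {ι : Type*} {s : Finset ι} {f : ι → ℕ} {n : ℕ}
    (hle : ∀ i ∈ s, f i ≤ n) (hsum : ∑ i ∈ s, f i = s.card * n) : ∀ i ∈ s, f i = n :=
  (Finset.sum_eq_sum_iff_of_le hle).mp (by simpa using hsum)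

theorem Finset.sum_card_filter_of_pairwiseDisjoint {α : Type*} [DecidableEq α]
    {P : Finset (Finset α)} (hP : (P : Set (Finset α)).PairwiseDisjoint id)
    (p : α → Prop) [DecidablePred p] :
    ∑ C ∈ P, (C.filter p).card = ((P.biUnion id).filter p).card := by
  rw [Finset.filter_biUnion, Finset.card_biUnion fun C hC D hD hCD =>
    Finset.disjoint_filter_filter (hP hC hD hCD)]
  rfl

lemma crosses_iff_exists_mem (e f : Finset (ZMod 6)) :
    Crosses e f ↔ Disjoint e f ∧ ∃ a ∈ e, ∃ b ∈ e, ∃ c ∈ f, ∃ d ∈ f,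
      a ≠ b ∧ c ≠ d ∧ e = {a, b} ∧ f = {c, d} ∧
        (InArc a b c ∧ ¬ InArc a b d ∨ InArc a b d ∧ ¬ InArc a b c) := by
  constructor
  · rintro ⟨hdisj, a, b, c, d, hab, hcd, rfl, rfl, hxor⟩
    exact ⟨hdisj, a, by simp, b, by simp, c, by simp, d, by simp, hab, hcd, rfl, rfl, hxor⟩
  · rintro ⟨hdisj, a, -, b, -, c, -, d, -, h⟩
    exact ⟨hdisj, a, b, c, d, h⟩

instance : DecidablePred ShortEdge := fun _ => by unfold ShortEdge; infer_instance
instance : DecidablePred LongEdge := fun _ => by unfold LongEdge; infer_instance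
-- Quantifying over the endpoints in `e` and `f` rather than over all of `ZMod 6` keeps `decide` fast.
instance inst_s9 (e f : Finset (ZMod 6)) : Decidable (Crosses e f) :=
  decidable_of_iff' _ (crosses_iff_exists_mem e f)

def interiorEdges : Finset (Finset (ZMod 6)) :=
  {{0, 2}, {1, 3}, {2, 4}, {3, 5}, {4, 0}, {5, 1}, {0, 3}, {1, 4}, {2, 5}}

lemma interiorEdge_iff_mem : ∀ e, InteriorEdge e ↔ e ∈ interiorEdges := by decide

lemma card_interiorEdges : interiorEdges.card = 9 := rfl

lemma card_filter_longEdge_interiorEdges : (interiorEdges.filter LongEdge).card = 3 := by decide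

lemma InteriorEdge.shortEdge_iff_not_longEdge {e : Finset (ZMod 6)} (he : InteriorEdge e) :
    ShortEdge e ↔ ¬ LongEdge e := by
  revert e
  decide

lemma LongEdge.interiorEdge {e : Finset (ZMod 6)} (he : LongEdge e) : InteriorEdge e :=
  ⟨he.1, fun a ha b hb hab => (he.2 a ha b hb hab).symm ▸ by norm_num⟩

lemma LongEdge.crosses {e f : Finset (ZMod 6)} (he : LongEdge e) (hf : LongEdge f) (hef : e ≠ f) :
    Crosses e f := by
  have key : ∀ e ∈ interiorEdges, ∀ f ∈ interiorEdges,
      LongEdge e → LongEdge f → e ≠ f → Crosses e f := by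
    decide
  exact key e ((interiorEdge_iff_mem e).mp he.interiorEdge)
    f ((interiorEdge_iff_mem f).mp hf.interiorEdge) he hf hef

set_option maxRecDepth 4000 in
set_option synthInstance.maxSize 256 in
lemma crosses_of_four_interiorEdges :
    ∀ e₁ ∈ interiorEdges, ∀ e₂ ∈ interiorEdges, e₁ ≠ e₂ ∧ ¬ Crosses e₁ e₂ →
    ∀ e₃ ∈ interiorEdges, e₁ ≠ e₃ ∧ ¬ Crosses e₁ e₃ → e₂ ≠ e₃ ∧ ¬ Crosses e₂ e₃ →
    ∀ e₄ ∈ interiorEdges, e₁ ≠ e₄ ∧ ¬ Crosses e₁ e₄ → e₂ ≠ e₄ ∧ ¬ Crosses e₂ e₄ →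
    e₃ ≠ e₄ → Crosses e₃ e₄ := by
  decide

lemma card_le_three_of_pairwise_not_crosses {S : Finset (Finset (ZMod 6))}
    (hS : S ⊆ interiorEdges) (hnc : ∀ e ∈ S, ∀ f ∈ S, e ≠ f → ¬ Crosses e f) : S.card ≤ 3 := by
  by_contra! hcard
  obtain ⟨e₁, he₁⟩ : S.Nonempty := Finset.card_pos.mp (by omega)
  obtain ⟨e₂, e₃, e₄, he₂, he₃, he₄, h₂₃, h₂₄, h₃₄⟩ := Finset.two_lt_card_iff.mp
    (show 2 < (S.erase e₁).card by rw [Finset.card_erase_of_mem he₁]; omega)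
  obtain ⟨h₂₁, he₂⟩ := Finset.mem_erase.mp he₂
  obtain ⟨h₃₁, he₃⟩ := Finset.mem_erase.mp he₃
  obtain ⟨h₄₁, he₄⟩ := Finset.mem_erase.mp he₄
  exact hnc e₃ he₃ e₄ he₄ h₃₄ <| crosses_of_four_interiorEdges
    e₁ (hS he₁) e₂ (hS he₂) ⟨h₂₁.symm, hnc e₁ he₁ e₂ he₂ h₂₁.symm⟩
    e₃ (hS he₃) ⟨h₃₁.symm, hnc e₁ he₁ e₃ he₃ h₃₁.symm⟩ ⟨h₂₃, hnc e₂ he₂ e₃ he₃ h₂₃⟩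
    e₄ (hS he₄) ⟨h₄₁.symm, hnc e₁ he₁ e₄ he₄ h₄₁.symm⟩ ⟨h₂₄, hnc e₂ he₂ e₄ he₄ h₂₄⟩ h₃₄

lemma card_filter_longEdge_le_one_of_pairwise_not_crosses {S : Finset (Finset (ZMod 6))}
    (hnc : ∀ e ∈ S, ∀ f ∈ S, e ≠ f → ¬ Crosses e f) : (S.filter LongEdge).card ≤ 1 := by
  refine Finset.card_le_one.mpr fun e he f hf => by_contra fun hef => ?_
  rw [Finset.mem_filter] at he hf
  exact hnc e he.1 f hf.1 hef (he.2.crosses hf.2 hef)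

lemma card_filter_shortEdge_eq {S : Finset (Finset (ZMod 6))} (hS : S ⊆ interiorEdges) :
    (S.filter ShortEdge).card = S.card - (S.filter LongEdge).card := by
  have hshort : S.filter ShortEdge = S.filter (¬ LongEdge ·) := Finset.filter_congr fun e he =>
    ((interiorEdge_iff_mem e).mpr (hS he)).shortEdge_iff_not_longEdge
  rw [hshort, ← Finset.card_filter_add_card_filter_not (s := S) LongEdge]
  omega

namespace IsSheetPartition

variable {P : Finset (Finset (Finset (ZMod 6)))}

lemma pairwiseDisjoint (hP : IsSheetPartition P) :
    (P : Set (Finset (Finset (ZMod 6)))).PairwiseDisjoint id :=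
  fun C hC D hD => hP.2.1 C hC D hD

lemma subset_interiorEdges (hP : IsSheetPartition P) {C : Finset (Finset (ZMod 6))}
    (hC : C ∈ P) : C ⊆ interiorEdges :=
  fun e he => (interiorEdge_iff_mem e).mp ((hP.2.2.1 e).mpr ⟨C, hC, he⟩)

lemma biUnion_eq (hP : IsSheetPartition P) : P.biUnion id = interiorEdges := by
  ext e
  simp only [Finset.mem_biUnion, id, ← interiorEdge_iff_mem, hP.2.2.1]

lemma sum_card (hP : IsSheetPartition P) : ∑ C ∈ P, C.card = 9 := by
  rw [← card_interiorEdges, ← hP.biUnion_eq, Finset.card_biUnion hP.pairwiseDisjoint]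
  rfl

lemma sum_card_filter (hP : IsSheetPartition P) (p : Finset (ZMod 6) → Prop) [DecidablePred p] :
    ∑ C ∈ P, (C.filter p).card = (interiorEdges.filter p).card := by
  rw [← hP.biUnion_eq]
  exact Finset.sum_card_filter_of_pairwiseDisjoint hP.pairwiseDisjoint p

lemma card_le_three (hP : IsSheetPartition P) {C : Finset (Finset (ZMod 6))} (hC : C ∈ P) :
    C.card ≤ 3 :=
  card_le_three_of_pairwise_not_crosses (hP.subset_interiorEdges hC) (hP.2.2.2 C hC)

lemma card_filter_longEdge_le_one (hP : IsSheetPartition P) {C : Finset (Finset (ZMod 6))}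
    (hC : C ∈ P) : (C.filter LongEdge).card ≤ 1 :=
  card_filter_longEdge_le_one_of_pairwise_not_crosses (hP.2.2.2 C hC)

end IsSheetPartition

/-- In every partition of the nine interior edges of `K₆` into exactly three classes of
pairwise noncrossing edges, each class consists of exactly one long edge and two short
edges. -/
theorem stmt_9 (P : Finset (Finset (Finset (ZMod 6))))
    (hP : IsSheetPartition P) (h3 : P.card = 3) :
    ∀ C ∈ P, {e : Finset (ZMod 6) | e ∈ C ∧ LongEdge e}.ncard = 1 ∧
      {e : Finset (ZMod 6) | e ∈ C ∧ ShortEdge e}.ncard = 2 := by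
  have hcard : ∀ C ∈ P, C.card = 3 :=
    Finset.eq_of_forall_le_of_sum_eq (fun _ => hP.card_le_three) (by rw [hP.sum_card, h3])
  have hlong : ∀ C ∈ P, (C.filter LongEdge).card = 1 :=
    Finset.eq_of_forall_le_of_sum_eq (fun _ => hP.card_filter_longEdge_le_one)
      (by rw [hP.sum_card_filter, card_filter_longEdge_interiorEdges, h3])
  intro C hC
  rw [← Finset.coe_filter, ← Finset.coe_filter, Set.ncard_coe_finset, Set.ncard_coe_finset,
    card_filter_shortEdge_eq (hP.subset_interiorEdges hC), hcard C hC, hlong C hC]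
  exact ⟨rfl, rfl⟩
end
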